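/- For every x ≥ 0, P_x-almost surely on the event {ζ < ∞}, the resurrected process reaches 0 continuously: Z_{ζ−} = 0, i.e., lim_{t↑ζ} Z_t = 0. In particular, either Z reaches 0 continuously at a finite time or it never reaches 0. -/

import Mathlib

noncomputable section
open MeasureTheory ProbabilityTheory Set Filter
open scoped ENNReal NNReal Classical

/-- The first passage time of a path into `(-∞,0]`, as an extended nonnegative real. -/
def tauP (f : ℝ → ℝ) : ℝ≥0∞ :=
  if ∃ t : ℝ, 0 ≤ t ∧ f t ≤ 0 then ENNReal.ofReal (sInf {t : ℝ | 0 ≤ t ∧ f t ≤ 0}) else ∞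

/-- The left limit `f(T-)` of a path at a time `T`, with the convention `f(0-) = f 0`. -/
def preVal (f : ℝ → ℝ) (T : ℝ≥0∞) : ℝ :=
  if T = 0 then f 0 else Function.leftLim f T.toReal

/-- The sequence of paths `X^{(n+1)}`, `n ≥ 0`, obtained from the path `f = X^{(1)}` by
successively removing the first jump through `0`. -/
def resSeq (f : ℝ → ℝ) : ℕ → ℝ → ℝ
  | 0 => f
  | n + 1 =>
      let g := resSeq f n
      if tauP g = ∞ then g
      else fun t =>
        if ENNReal.ofReal t < tauP g then g t
        else g t - (g (tauP g).toReal - preVal g (tauP g))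

/-- `tauSeq f n` is the resurrection time `τ_{n+1}`, the first passage time of `X^{(n+1)}`
into `(-∞,0]`. -/
def tauSeq (f : ℝ → ℝ) (n : ℕ) : ℝ≥0∞ := tauP (resSeq f n)

/-- The resurrection times `τ_n`, `n ≥ 0`, with `τ_0 = 0`. -/
def tauN (f : ℝ → ℝ) : ℕ → ℝ≥0∞
  | 0 => 0
  | n + 1 => tauSeq f n

/-- The resurrected path `Z` built from the path `f`: `Z_t = lim_n X^{(n)}_t 1_{t < τ_n}`. -/
def resProc (f : ℝ → ℝ) (t : ℝ) : ℝ :=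
  if h : ∃ n, ENNReal.ofReal t < tauSeq f n then resSeq f (Nat.find h) t else 0

/-- The absorption time `ζ = lim_n τ_n` of the resurrected path. -/
def zetaP (f : ℝ → ℝ) : ℝ≥0∞ := ⨆ n, tauSeq f n

/-- The exponential function on `ℝ≥0∞`. -/
def eexp (a : ℝ≥0∞) : ℝ≥0∞ := ∑' n : ℕ, a ^ n / (Nat.factorial n : ℝ≥0∞)

/-- The number of jumps of a path during the time interval `(0,1]` whose sizes lie in `A`,
as an element of `ℝ≥0∞`. -/
def jumpCount (f : ℝ → ℝ) (A : Set ℝ) : ℝ≥0∞ :=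
  ∑' _ : {t : ℝ // t ∈ Set.Ioc (0:ℝ) 1 ∧ f t - Function.leftLim f t ∈ A}, (1 : ℝ≥0∞)

/-- `X` is a Lévy process under `P`: it starts from `0`, has càdlàg paths and stationary
independent increments. -/
structure IsLevy {Ω : Type*} [MeasurableSpace Ω] (P : Measure Ω) (X : ℝ → Ω → ℝ) : Prop where
  measurable : ∀ t, Measurable (X t)
  init : ∀ ω, X 0 ω = 0
  cadlag_right : ∀ ω, ∀ t ≥ (0:ℝ), ContinuousWithinAt (fun s => X s ω) (Set.Ici t) t
  cadlag_left : ∀ ω, ∀ t > (0:ℝ),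
    Tendsto (fun s => X s ω) (nhdsWithin t (Set.Iio t)) (nhds (Function.leftLim (fun s => X s ω) t))
  indep_incr : ∀ (n : ℕ) (t : ℕ → ℝ), Monotone t → 0 ≤ t 0 →
    iIndepFun
      (fun (i : Fin n) ω => X (t (i + 1 : ℕ)) ω - X (t i) ω) P
  stat_incr : ∀ s t : ℝ, 0 ≤ s → 0 ≤ t →
    Measure.map (fun ω => X (s + t) ω - X s ω) P = Measure.map (X t) P

/-- `π` is the Lévy measure of the process `X` under `P` : on sets bounded away from `0`, it
gives the expected number of jumps of `X` during `(0,1]` with sizes in the set. -/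
def IsLevyMeasure {Ω : Type*} [MeasurableSpace Ω] (P : Measure Ω) (X : ℝ → Ω → ℝ)
    (π : Measure ℝ) : Prop :=
  π {0} = 0 ∧ ∀ A : Set ℝ, MeasurableSet A → (∃ ε > 0, A ⊆ {y : ℝ | ε ≤ |y|}) →
    π A = ∫⁻ ω, jumpCount (fun t => X t ω) A ∂P

/-- The negative tail `π̄⁻(y) = π((-∞,y])` of a Lévy measure. -/
def negTail (π : Measure ℝ) (y : ℝ) : ℝ≥0∞ := π (Set.Iic y)

/-- The path of the process started from `x`, i.e. the process `X` under `P_x`. -/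
def pathFrom {Ω : Type*} (X : ℝ → Ω → ℝ) (x : ℝ) (ω : Ω) : ℝ → ℝ := fun t => x + X t ω


/-! The claim holds for every path that is right-continuous with left limits, hence surely.
Removing the jump across `0` at a passage time only shifts the path by a constant from that time
on, so `resSeq f (n + 1) = f + sₙ` on `[τₙ, ∞)`, where `τₙ = tauSeq f n` and `sₙ` is the total
amount added back so far. If `τₙ₊₁ = τₙ` for some `n`, the value of `resSeq f (n + 1)` at `τₙ` is
the left limit of `resSeq f n` there; it is `≤ 0` by right-continuity and `≥ 0` since the path
is positive before `τₙ`, so `resSeq f n` creeps into `0`, after which nothing changes. Otherwise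
`τₙ ↑ ζ` strictly, and `f τₙ₊₁ ≤ -sₙ < f τₙ` squeezes `sₙ` to `-f(ζ-)`, so `Z = f + sₙ` on
`[τₙ, τₙ₊₁)` tends to `0`. -/

namespace Resurrection
open Function Topology

def IsCadlag (g : ℝ → ℝ) : Prop :=
  (∀ t ≥ (0:ℝ), ContinuousWithinAt g (Ici t) t) ∧ ∀ t > (0:ℝ), ∃ L, Tendsto g (𝓝[<] t) (𝓝 L)

namespace IsCadlag

variable {g h : ℝ → ℝ}

lemma tendsto_leftLim (hg : IsCadlag g) {t : ℝ} (ht : 0 < t) :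
    Tendsto g (𝓝[<] t) (𝓝 (leftLim g t)) := by
  obtain ⟨L, hL⟩ := hg.2 t ht
  rwa [leftLim_eq_of_tendsto hL]

lemma add (hg : IsCadlag g) (hh : IsCadlag h) : IsCadlag (g + h) :=
  ⟨fun t ht => (hg.1 t ht).add (hh.1 t ht), fun t ht => by
    obtain ⟨L, hL⟩ := hg.2 t ht
    obtain ⟨M, hM⟩ := hh.2 t ht
    exact ⟨L + M, hL.add hM⟩⟩

end IsCadlag

lemma isCadlag_indicator_Ici (w c : ℝ) : IsCadlag ((Ici w).indicator fun _ => c) := by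
  refine ⟨fun t _ => ?_, fun t _ => ?_⟩
  · rcases lt_or_ge t w with htw | hwt
    · refine (ContinuousAt.congr (f := fun _ => (0:ℝ)) continuousAt_const ?_).continuousWithinAt
      filter_upwards [eventually_lt_nhds htw] with u hu
      exact (indicator_of_notMem (not_le.2 hu) _).symm
    · exact continuousWithinAt_const.congr (fun u hu => indicator_of_mem (hwt.trans hu) _)
        (indicator_of_mem hwt _)
  · rcases le_or_gt t w with htw | hwt
    · refine ⟨(0:ℝ), tendsto_const_nhds.congr' ?_⟩
      filter_upwards [self_mem_nhdsWithin] with u hu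
      exact (indicator_of_notMem (not_le.2 (lt_of_lt_of_le hu htw)) _).symm
    · refine ⟨c, tendsto_const_nhds.congr' ?_⟩
      filter_upwards [Ioo_mem_nhdsLT hwt] with u hu
      exact (indicator_of_mem (mem_Ici.2 hu.1.le) fun _ => c).symm

section FirstPassage

variable {g : ℝ → ℝ}

lemma tauP_le_ofReal {t : ℝ} (ht : 0 ≤ t) (hgt : g t ≤ 0) : tauP g ≤ ENNReal.ofReal t := by
  rw [tauP, if_pos ⟨t, ht, hgt⟩]
  exact ENNReal.ofReal_le_ofReal (csInf_le ⟨0, fun s hs => hs.1⟩ ⟨ht, hgt⟩)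

lemma pos_of_ofReal_lt_tauP {t : ℝ} (ht : 0 ≤ t) (h : ENNReal.ofReal t < tauP g) : 0 < g t :=
  lt_of_not_ge fun hgt => (tauP_le_ofReal ht hgt).not_gt h

lemma le_tauP {T : ℝ≥0∞} (hT : ∀ t, 0 ≤ t → g t ≤ 0 → T ≤ ENNReal.ofReal t) : T ≤ tauP g := by
  unfold tauP
  split_ifs with hex
  · obtain ⟨t, ht, hgt⟩ := hex
    have hT' : T ≠ ∞ := ne_top_of_le_ne_top ENNReal.ofReal_ne_top (hT t ht hgt)
    rw [← ENNReal.ofReal_toReal hT']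
    exact ENNReal.ofReal_le_ofReal (le_csInf ⟨t, ht, hgt⟩ fun s hs =>
      (ENNReal.le_ofReal_iff_toReal_le hT' hs.1).1 (hT s hs.1 hs.2))
  · exact le_top

lemma apply_toReal_tauP_nonpos (hg : ∀ t ≥ (0:ℝ), ContinuousWithinAt g (Ici t) t)
    (hτ : tauP g ≠ ∞) : g (tauP g).toReal ≤ 0 := by
  have hex : ∃ t : ℝ, 0 ≤ t ∧ g t ≤ 0 := by
    by_contra h
    exact hτ (if_neg h)
  set S := {t : ℝ | 0 ≤ t ∧ g t ≤ 0}
  have hbdd : BddBelow S := ⟨0, fun s hs => hs.1⟩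
  have hS0 : 0 ≤ sInf S := le_csInf hex fun s hs => hs.1
  have hcont : ContinuousWithinAt g S (sInf S) :=
    (hg _ hS0).mono fun s hs => csInf_le hbdd hs
  rw [tauP, if_pos hex, ENNReal.toReal_ofReal hS0]
  exact closure_minimal (image_subset_iff.2 fun s hs => hs.2) isClosed_Iic
    (hcont.mem_closure_image (csInf_mem_closure hex hbdd))

lemma IsCadlag.leftLim_toReal_tauP_nonneg (hg : IsCadlag g) (h0 : tauP g ≠ 0)
    (hτ : tauP g ≠ ∞) : 0 ≤ leftLim g (tauP g).toReal := by
  have hw : 0 < (tauP g).toReal := ENNReal.toReal_pos h0 hτ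
  refine ge_of_tendsto (hg.tendsto_leftLim hw) ?_
  filter_upwards [Ioo_mem_nhdsLT hw] with s hs
  exact (pos_of_ofReal_lt_tauP hs.1.le ((ENNReal.ofReal_lt_iff_lt_toReal hs.1.le hτ).2 hs.2)).le

end FirstPassage

section ResurrectionStep

def resStep (g : ℝ → ℝ) : ℝ → ℝ :=
  if tauP g = ∞ then g
  else fun t =>
    if ENNReal.ofReal t < tauP g then g t
    else g t - (g (tauP g).toReal - preVal g (tauP g))

def resJump (g : ℝ → ℝ) : ℝ := preVal g (tauP g) - g (tauP g).toReal

variable {g : ℝ → ℝ}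

lemma resSeq_succ (f : ℝ → ℝ) (n : ℕ) : resSeq f (n + 1) = resStep (resSeq f n) := rfl

lemma resStep_of_tauP_eq_top (h : tauP g = ∞) : resStep g = g := if_pos h

lemma resStep_apply_of_lt {t : ℝ} (h : ENNReal.ofReal t < tauP g) : resStep g t = g t := by
  unfold resStep
  split_ifs
  · rfl
  · exact if_pos h

lemma resStep_apply_of_le {t : ℝ} (hτ : tauP g ≠ ∞) (h : tauP g ≤ ENNReal.ofReal t) :
    resStep g t = g t + resJump g := by
  simp only [resStep, resJump, if_neg hτ, if_neg (not_lt.2 h)]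
  ring

lemma resJump_of_tauP_eq_zero (h : tauP g = 0) : resJump g = 0 := by
  simp [resJump, preVal, h]

lemma resStep_eq_add_indicator (hτ : tauP g ≠ ∞) :
    resStep g = g + (Ici (tauP g).toReal).indicator fun _ => resJump g := by
  funext t
  rw [Pi.add_apply]
  by_cases ht : ENNReal.ofReal t < tauP g
  · have hwt : t ∉ Ici (tauP g).toReal := fun hwt =>
      ht.not_ge (ENNReal.ofReal_toReal hτ ▸ ENNReal.ofReal_le_ofReal hwt)
    rw [resStep_apply_of_lt ht, indicator_of_notMem hwt, add_zero]
  · rw [not_lt] at ht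
    rw [resStep_apply_of_le hτ ht]
    by_cases hwt : (tauP g).toReal ≤ t
    · rw [indicator_of_mem (mem_Ici.2 hwt)]
    · -- `tauP g ≤ ofReal t` with `t < (tauP g).toReal` only happens for `t < 0 = tauP g`
      have ht0 : t < 0 := lt_of_not_ge fun ht0 =>
        hwt ((ENNReal.le_ofReal_iff_toReal_le hτ ht0).1 ht)
      have h0 : tauP g = 0 := nonpos_iff_eq_zero.1 (ENNReal.ofReal_of_nonpos ht0.le ▸ ht)
      rw [indicator_of_notMem (fun h => hwt (mem_Ici.1 h)), resJump_of_tauP_eq_zero h0]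

lemma resStep_eq_self (h : resJump g = 0) : resStep g = g := by
  by_cases hτ : tauP g = ∞
  · exact resStep_of_tauP_eq_top hτ
  · rw [resStep_eq_add_indicator hτ, h]
    funext t
    simp

lemma isCadlag_resStep (hg : IsCadlag g) : IsCadlag (resStep g) := by
  by_cases hτ : tauP g = ∞
  · rwa [resStep_of_tauP_eq_top hτ]
  · rw [resStep_eq_add_indicator hτ]
    exact hg.add (isCadlag_indicator_Ici _ _)

lemma tauP_le_tauP_resStep (g : ℝ → ℝ) : tauP g ≤ tauP (resStep g) :=
  le_tauP fun t ht hle => not_lt.1 fun hlt => by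
    rw [resStep_apply_of_lt hlt] at hle
    exact (pos_of_ofReal_lt_tauP ht hlt).not_ge hle

end ResurrectionStep

section ResurrectedPath

variable {f : ℝ → ℝ}

lemma isCadlag_resSeq (hf : IsCadlag f) (n : ℕ) : IsCadlag (resSeq f n) := by
  induction n with
  | zero => exact hf
  | succ n ih => exact isCadlag_resStep ih

lemma tauSeq_mono (f : ℝ → ℝ) : Monotone (tauSeq f) :=
  monotone_nat_of_le_succ fun n => tauP_le_tauP_resStep (resSeq f n)

lemma resSeq_apply_of_lt_tauSeq {m n : ℕ} {u : ℝ} (hmn : m ≤ n)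
    (hu : ENNReal.ofReal u < tauSeq f m) : resSeq f n u = resSeq f m u := by
  induction n, hmn using Nat.le_induction with
  | base => rfl
  | succ n hmn ih =>
    rw [resSeq_succ, resStep_apply_of_lt (hu.trans_le (tauSeq_mono f hmn)), ih]

lemma resProc_eq_resSeq {n : ℕ} {u : ℝ} (hu : ENNReal.ofReal u < tauSeq f n) :
    resProc f u = resSeq f n u := by
  have hex : ∃ n, ENNReal.ofReal u < tauSeq f n := ⟨n, hu⟩
  rw [resProc, dif_pos hex, resSeq_apply_of_lt_tauSeq (Nat.find_min' hex hu) (Nat.find_spec hex)]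

lemma resProc_eq_zero {u : ℝ} (hu : zetaP f ≤ ENNReal.ofReal u) : resProc f u = 0 := by
  rw [resProc, dif_neg]
  push Not
  exact fun n => (le_iSup (tauSeq f) n).trans hu

lemma resProc_pos {u : ℝ} (hu0 : 0 ≤ u) (hu : ENNReal.ofReal u < zetaP f) : 0 < resProc f u := by
  obtain ⟨n, hn⟩ := lt_iSup_iff.1 hu
  rw [resProc_eq_resSeq hn]
  exact pos_of_ofReal_lt_tauP hu0 hn

lemma zetaP_eq_tauSeq_of_resSeq_succ_eq {n : ℕ} (h : resSeq f (n + 1) = resSeq f n) :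
    zetaP f = tauSeq f n := by
  have hstable : ∀ m, n ≤ m → resSeq f m = resSeq f n := fun m hnm => by
    induction m, hnm using Nat.le_induction with
    | base => rfl
    | succ m _ ih => rw [resSeq_succ, ih, ← resSeq_succ, h]
  refine le_antisymm (iSup_le fun m => ?_) (le_iSup (tauSeq f) n)
  rcases le_total m n with hmn | hnm
  · exact tauSeq_mono f hmn
  · rw [tauSeq, hstable m hnm, ← tauSeq]

lemma resSeq_succ_apply_of_le {n : ℕ} {u : ℝ} (hn : tauSeq f n ≠ ∞)
    (hu : (tauSeq f n).toReal ≤ u) :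
    resSeq f (n + 1) u = resSeq f n u + resJump (resSeq f n) :=
  resStep_apply_of_le hn ((ENNReal.le_ofReal_iff_toReal_le hn (ENNReal.toReal_nonneg.trans hu)).2 hu)

lemma resSeq_succ_eq_add_sum {n : ℕ} {u : ℝ} (hn : tauSeq f n ≠ ∞)
    (hu : (tauSeq f n).toReal ≤ u) :
    resSeq f (n + 1) u = f u + ∑ k ∈ Finset.range (n + 1), resJump (resSeq f k) := by
  induction n with
  | zero => rw [resSeq_succ_apply_of_le hn hu, Finset.sum_range_one]; rfl
  | succ n ih =>
    have hmono := tauSeq_mono f n.le_succ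
    rw [resSeq_succ_apply_of_le hn hu,
      ih (ne_top_of_le_ne_top hn hmono) ((ENNReal.toReal_mono hn hmono).trans hu),
      Finset.sum_range_succ _ (n + 1)]
    ring

end ResurrectedPath

lemma tendsto_nhdsLT_of_eq_on_Ico {α β : Type*} [LinearOrder α] [TopologicalSpace α]
    [OrderTopology α] [TopologicalSpace β] {t : ℕ → α} {z : α} (ht : Monotone t)
    (htz : Tendsto t atTop (𝓝 z)) (hlt : ∀ n, t n < z) {g : α → β} {a : ℕ → β} {A : β}
    (ha : Tendsto a atTop (𝓝 A)) (hg : ∀ n u, t n ≤ u → u < t (n + 1) → g u = a n) :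
    Tendsto g (𝓝[<] z) (𝓝 A) := by
  rw [tendsto_def]
  intro U hU
  obtain ⟨N, hN⟩ := eventually_atTop.1 (ha hU)
  filter_upwards [Ioo_mem_nhdsLT (hlt N)] with u hu
  have hex : ∃ m, u < t m := (htz.eventually (lt_mem_nhds hu.2)).exists
  have hNm : N < Nat.find hex := lt_of_not_ge fun h =>
    (ht h).not_gt (hu.1.trans (Nat.find_spec hex))
  obtain ⟨k, hk⟩ := Nat.exists_eq_add_of_lt hNm
  have hlow : t (N + k) ≤ u := not_lt.1 (Nat.find_min hex (by omega))
  have hupp : u < t (N + k + 1) := hk ▸ Nat.find_spec hex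
  show g u ∈ U
  rw [hg _ u hlow hupp]
  exact hN _ (Nat.le_add_right N k)

section LeftLimitAtAbsorption

variable {f : ℝ → ℝ}

lemma tendsto_resProc_of_tauSeq_zero_eq_zero (h0 : tauSeq f 0 = 0) :
    Tendsto (resProc f) (𝓝[<] (zetaP f).toReal) (𝓝 0) := by
  have hζ : zetaP f = 0 :=
    (zetaP_eq_tauSeq_of_resSeq_succ_eq (resStep_eq_self (resJump_of_tauP_eq_zero h0))).trans h0
  have hZ : resProc f = fun _ => 0 := funext fun u => resProc_eq_zero (by simp [hζ])
  rw [hZ]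
  exact tendsto_const_nhds

lemma tendsto_resProc_of_tauSeq_succ_eq (hf : IsCadlag f) {N : ℕ} (h0 : tauSeq f N ≠ 0)
    (hτ : tauSeq f N ≠ ∞) (hN : tauSeq f (N + 1) = tauSeq f N) :
    Tendsto (resProc f) (𝓝[<] (zetaP f).toReal) (𝓝 0) := by
  set g := resSeq f N
  set w := (tauSeq f N).toReal
  have hw : 0 < w := ENNReal.toReal_pos h0 hτ
  have hbefore : ∀ u < w, ENNReal.ofReal u < tauSeq f N := fun u hu =>
    ENNReal.ofReal_toReal hτ ▸ (ENNReal.ofReal_lt_ofReal_iff hw).2 hu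
  have hval : resSeq f (N + 1) w = leftLim g w := by
    rw [resSeq_succ_apply_of_le hτ le_rfl, resJump, preVal,
      if_neg (show tauP (resSeq f N) ≠ 0 from h0)]
    exact add_sub_cancel _ _
  have hvalle : resSeq f (N + 1) w ≤ 0 := by
    have := apply_toReal_tauP_nonpos (isCadlag_resSeq hf (N + 1)).1
      (show tauSeq f (N + 1) ≠ ∞ from hN ▸ hτ)
    rwa [← tauSeq, hN] at this
  have hleft : leftLim g w = 0 :=
    le_antisymm (hval ▸ hvalle) ((isCadlag_resSeq hf N).leftLim_toReal_tauP_nonneg h0 hτ)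
  have hlim : Tendsto g (𝓝[<] w) (𝓝 0) := hleft ▸ (isCadlag_resSeq hf N).tendsto_leftLim hw
  have hagree : g =ᶠ[𝓝[<] w] resSeq f (N + 1) := by
    filter_upwards [self_mem_nhdsWithin] with u hu
    exact (resStep_apply_of_lt (hbefore u hu)).symm
  have hstable : resSeq f (N + 1 + 1) = resSeq f (N + 1) := by
    refine resStep_eq_self ?_
    rw [resJump, ← tauSeq, hN, preVal, if_neg h0, leftLim_eq_of_tendsto (hlim.congr' hagree),
      hval, hleft, sub_zero]
  rw [(zetaP_eq_tauSeq_of_resSeq_succ_eq hstable).trans hN]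
  refine hlim.congr' ?_
  filter_upwards [self_mem_nhdsWithin] with u hu
  exact (resProc_eq_resSeq (hbefore u hu)).symm

lemma tauSeq_ne_top (hζ : zetaP f ≠ ∞) (n : ℕ) : tauSeq f n ≠ ∞ :=
  ne_top_of_le_ne_top hζ (le_iSup (tauSeq f) n)

lemma tendsto_toReal_tauSeq (hζ : zetaP f ≠ ∞) :
    Tendsto (fun n => (tauSeq f n).toReal) atTop (𝓝 (zetaP f).toReal) :=
  (ENNReal.tendsto_toReal hζ).comp (tendsto_atTop_iSup (tauSeq_mono f))

lemma toReal_tauSeq_lt_toReal_zetaP (hζ : zetaP f ≠ ∞) (hmono : StrictMono (tauSeq f)) (n : ℕ) :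
    (tauSeq f n).toReal < (zetaP f).toReal :=
  (ENNReal.toReal_lt_toReal (tauSeq_ne_top hζ n) hζ).2
    ((hmono n.lt_succ_self).trans_le (le_iSup (tauSeq f) (n + 1)))

lemma tendsto_sum_resJump_of_strictMono (hf : IsCadlag f) (hζ : zetaP f ≠ ∞)
    (hmono : StrictMono (tauSeq f)) {L : ℝ} (hL : Tendsto f (𝓝[<] (zetaP f).toReal) (𝓝 L)) :
    Tendsto (fun n => ∑ k ∈ Finset.range (n + 1), resJump (resSeq f k)) atTop (𝓝 (-L)) := by
  set t : ℕ → ℝ := fun n => (tauSeq f n).toReal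
  set s : ℕ → ℝ := fun n => ∑ k ∈ Finset.range (n + 1), resJump (resSeq f k)
  have hft : Tendsto (fun n => f (t n)) atTop (𝓝 L) := hL.comp (tendsto_nhdsWithin_iff.2
    ⟨tendsto_toReal_tauSeq hζ, Eventually.of_forall (toReal_tauSeq_lt_toReal_zetaP hζ hmono)⟩)
  have hupper : ∀ n, f (t (n + 1)) ≤ -s n := fun n => by
    have := apply_toReal_tauP_nonpos (isCadlag_resSeq hf (n + 1)).1 (tauSeq_ne_top hζ (n + 1))
    rw [← tauSeq, resSeq_succ_eq_add_sum (tauSeq_ne_top hζ n)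
      (ENNReal.toReal_mono (tauSeq_ne_top hζ (n + 1)) (tauSeq_mono f n.le_succ))] at this
    linarith
  have hlower : ∀ n, -s n < f (t n) := fun n => by
    have hlt : ENNReal.ofReal (t n) < tauSeq f (n + 1) := by
      rw [ENNReal.ofReal_toReal (tauSeq_ne_top hζ n)]
      exact hmono n.lt_succ_self
    have := pos_of_ofReal_lt_tauP ENNReal.toReal_nonneg hlt
    rw [resSeq_succ_eq_add_sum (tauSeq_ne_top hζ n) le_rfl] at this
    linarith
  simpa using (tendsto_of_tendsto_of_tendsto_of_le_of_le (hft.comp (tendsto_add_atTop_nat 1))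
    hft (fun n => hupper n) (fun n => (hlower n).le)).neg

lemma tendsto_resProc_of_strictMono (hf : IsCadlag f) (hζ : zetaP f ≠ ∞)
    (hmono : StrictMono (tauSeq f)) :
    Tendsto (resProc f) (𝓝[<] (zetaP f).toReal) (𝓝 0) := by
  have htz := toReal_tauSeq_lt_toReal_zetaP hζ hmono
  obtain ⟨L, hL⟩ := hf.2 _ (ENNReal.toReal_nonneg.trans_lt (htz 0))
  have hZ : Tendsto (fun u => resProc f u - f u) (𝓝[<] (zetaP f).toReal) (𝓝 (-L)) := by
    refine tendsto_nhdsLT_of_eq_on_Ico (fun m n hmn => ENNReal.toReal_mono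
      (tauSeq_ne_top hζ n) (tauSeq_mono f hmn)) (tendsto_toReal_tauSeq hζ) htz
      (tendsto_sum_resJump_of_strictMono hf hζ hmono hL) fun n u hnu hu => ?_
    have hu0 : 0 ≤ u := ENNReal.toReal_nonneg.trans hnu
    rw [resProc_eq_resSeq ((ENNReal.ofReal_lt_iff_lt_toReal hu0 (tauSeq_ne_top hζ (n + 1))).2 hu),
      resSeq_succ_eq_add_sum (tauSeq_ne_top hζ n) hnu]
    ring
  simpa using hZ.add hL

lemma IsCadlag.tendsto_resProc_zetaP (hf : IsCadlag f) (hζ : zetaP f < ∞) :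
    Tendsto (resProc f) (𝓝[<] (zetaP f).toReal) (𝓝 0) := by
  by_cases hstall : ∃ N, tauSeq f (N + 1) = tauSeq f N
  · obtain ⟨N, hN⟩ := hstall
    by_cases h0 : tauSeq f N = 0
    · exact tendsto_resProc_of_tauSeq_zero_eq_zero
        (nonpos_iff_eq_zero.1 (h0 ▸ tauSeq_mono f N.zero_le))
    · exact tendsto_resProc_of_tauSeq_succ_eq hf h0 (tauSeq_ne_top hζ.ne N) hN
  · push Not at hstall
    exact tendsto_resProc_of_strictMono hf hζ.ne (strictMono_nat_of_lt_succ fun n =>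
      (tauSeq_mono f n.le_succ).lt_of_ne (hstall n).symm)

end LeftLimitAtAbsorption

lemma _root_.IsLevy.isCadlag_pathFrom {Ω : Type*} [MeasurableSpace Ω] {P : Measure Ω}
    {X : ℝ → Ω → ℝ} (hX : IsLevy P X) (x : ℝ) (ω : Ω) : IsCadlag (pathFrom X x ω) :=
  ⟨fun t ht => continuousWithinAt_const.add (hX.cadlag_right ω t ht),
    fun t ht => ⟨_, tendsto_const_nhds.add (hX.cadlag_left ω t ht)⟩⟩

end Resurrection

theorem statement14_general {Ω : Type*} [MeasurableSpace Ω] (P : Measure Ω)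
    (X : ℝ → Ω → ℝ) (hX : IsLevy P X) :
    ∀ x : ℝ, 0 ≤ x → ∀ᵐ ω ∂P,
      (zetaP (pathFrom X x ω) < ∞ →
        Tendsto (fun t => resProc (pathFrom X x ω) t)
          (nhdsWithin (zetaP (pathFrom X x ω)).toReal
            (Set.Iio (zetaP (pathFrom X x ω)).toReal))
          (nhds 0))
      ∧ (zetaP (pathFrom X x ω) = ∞ → ∀ t : ℝ, 0 ≤ t → resProc (pathFrom X x ω) t ≠ 0) := by
  intro x _
  refine Eventually.of_forall fun ω => ⟨(hX.isCadlag_pathFrom x ω).tendsto_resProc_zetaP,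
    fun hζ t ht => (Resurrection.resProc_pos ht (hζ ▸ ENNReal.ofReal_lt_top)).ne'⟩

/-- On the event `{ζ < ∞}`, the resurrected process reaches `0` continuously: `Z_{ζ-} = 0`;
in particular, either `Z` reaches `0` continuously at a finite time or it never reaches `0`. -/
theorem statement14 {Ω : Type*} [MeasurableSpace Ω] (P : Measure Ω) [IsProbabilityMeasure P]
    (X : ℝ → Ω → ℝ) (hX : IsLevy P X) :
    ∀ x : ℝ, 0 ≤ x → ∀ᵐ ω ∂P,
      (zetaP (pathFrom X x ω) < ∞ →
        Tendsto (fun t => resProc (pathFrom X x ω) t)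
          (nhdsWithin (zetaP (pathFrom X x ω)).toReal
            (Set.Iio (zetaP (pathFrom X x ω)).toReal))
          (nhds 0))
      ∧ (zetaP (pathFrom X x ω) = ∞ → ∀ t : ℝ, 0 ≤ t → resProc (pathFrom X x ω) t ≠ 0) :=
  statement14_general P X hX
end
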